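/- Let φ, ψ : [0,∞) → ℂ be twice-differentiable with ψ(0) = φ(0) = 0, suppose -φ'' + Vφ + λ²φ = 0 and -ψ'' + Vψ + λ²ψ = c·φ on [0,∞) for some constant c ≠ 0, and suppose φ, φ', ψ, ψ' all tend to 0 at infinity fast enough that ψφ' - φψ' → 0 as x → ∞. Then ∫₀^∞ φ(x)² dx = 0. -/

import Mathlib

/-!
The Wronskian `W = ψ φ' - φ ψ'` satisfies `W' = ψ φ'' - φ ψ'' = c φ²`, because the potential
terms cancel. Since `W` vanishes at `0` (Dirichlet condition) and at infinity, integrating gives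
`c ∫₀^∞ φ² = 0`, and `c ≠ 0`.
-/

open MeasureTheory Filter

section Wronskian

variable {𝔸 : Type*} [NormedCommRing 𝔸] [NormedAlgebra ℝ 𝔸]

noncomputable def wronskian (f g : ℝ → 𝔸) (x : ℝ) : 𝔸 := f x * deriv g x - g x * deriv f x

theorem wronskian_eq_zero_of_eq_zero {f g : ℝ → 𝔸} {x : ℝ} (hf : f x = 0) (hg : g x = 0) :
    wronskian f g x = 0 := by
  simp [wronskian, hf, hg]

theorem hasDerivAt_wronskian {f g : ℝ → 𝔸} {x : ℝ}
    (hf : DifferentiableAt ℝ f x) (hf' : DifferentiableAt ℝ (deriv f) x)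
    (hg : DifferentiableAt ℝ g x) (hg' : DifferentiableAt ℝ (deriv g) x) :
    HasDerivAt (wronskian f g)
      (f x * deriv (deriv g) x - g x * deriv (deriv f) x) x :=
  ((hf.hasDerivAt.mul hg'.hasDerivAt).sub (hg.hasDerivAt.mul hf'.hasDerivAt)).congr_deriv
    (by ring)

theorem continuousAt_wronskian {f g : ℝ → 𝔸} {x : ℝ}
    (hf : DifferentiableAt ℝ f x) (hf' : DifferentiableAt ℝ (deriv f) x)
    (hg : DifferentiableAt ℝ g x) (hg' : DifferentiableAt ℝ (deriv g) x) :
    ContinuousAt (wronskian f g) x :=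
  (hasDerivAt_wronskian hf hf' hg hg').continuousAt

end Wronskian

theorem hasDerivAt_wronskian_of_generalizedEigenvector {V : ℝ → ℂ} {lam c : ℂ}
    {φ ψ : ℝ → ℂ} {x : ℝ}
    (hφ : DifferentiableAt ℝ φ x) (hφ' : DifferentiableAt ℝ (deriv φ) x)
    (hψ : DifferentiableAt ℝ ψ x) (hψ' : DifferentiableAt ℝ (deriv ψ) x)
    (hodeφ : -(deriv (deriv φ) x) + V x * φ x + lam ^ 2 * φ x = 0)
    (hodeψ : -(deriv (deriv ψ) x) + V x * ψ x + lam ^ 2 * ψ x = c * φ x) :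
    HasDerivAt (wronskian ψ φ) (c * φ x ^ 2) x :=
  (hasDerivAt_wronskian hψ hψ' hφ hφ').congr_deriv
    (by linear_combination φ x * hodeψ - ψ x * hodeφ)

theorem non_simple_eigenvalue_pairing_vanishes
    (V : ℝ → ℂ) (lam c : ℂ) (hc : c ≠ 0)
    (φ ψ : ℝ → ℂ)
    (hsφ : ∀ x : ℝ, DifferentiableAt ℝ φ x ∧ DifferentiableAt ℝ (deriv φ) x)
    (hsψ : ∀ x : ℝ, DifferentiableAt ℝ ψ x ∧ DifferentiableAt ℝ (deriv ψ) x)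
    (h0φ : φ 0 = 0) (h0ψ : ψ 0 = 0)
    (hodeφ : ∀ x : ℝ, 0 ≤ x →
      -(deriv (deriv φ) x) + V x * φ x + lam ^ 2 * φ x = 0)
    (hodeψ : ∀ x : ℝ, 0 ≤ x →
      -(deriv (deriv ψ) x) + V x * ψ x + lam ^ 2 * ψ x = c * φ x)
    (hint : IntegrableOn (fun x : ℝ => φ x ^ 2) (Set.Ioi 0))
    (hwron : Tendsto (fun x : ℝ => ψ x * deriv φ x - φ x * deriv ψ x) atTop (nhds 0)) :
    ∫ x in Set.Ioi (0:ℝ), φ x ^ 2 = 0 := by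
  have hderiv : ∀ x ∈ Set.Ioi (0:ℝ), HasDerivAt (wronskian ψ φ) (c * φ x ^ 2) x :=
    fun x hx => hasDerivAt_wronskian_of_generalizedEigenvector (hsφ x).1 (hsφ x).2
      (hsψ x).1 (hsψ x).2 (hodeφ x hx.le) (hodeψ x hx.le)
  have hcont : ContinuousWithinAt (wronskian ψ φ) (Set.Ici 0) 0 :=
    (continuousAt_wronskian (hsψ 0).1 (hsψ 0).2 (hsφ 0).1 (hsφ 0).2).continuousWithinAt
  have key := integral_Ioi_of_hasDerivAt_of_tendsto hcont hderiv (hint.const_mul c) hwron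
  rw [wronskian_eq_zero_of_eq_zero h0ψ h0φ, sub_zero, integral_const_mul] at key
  exact (mul_eq_zero.mp key).resolve_left hc
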